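/- Asymptotic smooth Rényi entropy of a mixture, lower bound: for the mixture source X of m i.i.d. components with strictly decreasing entropies, any α ∈ (0,1), and any ε with A_i < ε < A_{i+1}, liminf_{n→∞} (1/n) H_α^ε(P_{X^n}) ≥ H(X_i). -/

import Mathlib

open scoped ENNReal

/-- The smoothing set `B^ε(P)`. -/
def smoothSet {X : Type*} (P : X → ℝ≥0∞) (ε : ℝ) : Set (X → ℝ≥0∞) :=
  {Q | (∀ x, Q x ≤ P x) ∧ ENNReal.ofReal (1 - ε) ≤ ∑' x, Q x}

/-- `r_α^ε(P) = inf_{Q ∈ B^ε(P)} ∑_x Q(x)^α`. -/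
noncomputable def rSmooth {X : Type*} (P : X → ℝ≥0∞) (ε α : ℝ) : ℝ≥0∞ :=
  ⨅ Q ∈ smoothSet P ε, ∑' x, Q x ^ α

/-- The `ε`-smooth Rényi entropy of order `α` (extended-real valued). -/
noncomputable def smoothRenyi {X : Type*} (P : X → ℝ≥0∞) (ε α : ℝ) : EReal :=
  (((1 - α)⁻¹ : ℝ) : EReal) * ENNReal.log (rSmooth P ε α)

/-- The mixture of `m` i.i.d. sources. -/
noncomputable def mixProd {X : Type*} {m : ℕ} (w : Fin m → ℝ) (P : Fin m → X → ℝ≥0∞)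
    (n : ℕ) (x : Fin n → X) : ℝ≥0∞ :=
  ∑ k, ENNReal.ofReal (w k) * ∏ t, P k (x t)

/-- `A_i = ∑_{j=1}^{i-1} w_j` (0-based). -/
noncomputable def Aweight {m : ℕ} (w : Fin m → ℝ) (i : ℕ) : ℝ :=
  ∑ k ∈ Finset.univ.filter (fun k : Fin m => (k : ℕ) < i), w k

/-!
Fix `a < H(X_i)` and call `x ∈ Xⁿ` heavy when `P_{Xⁿ}(x) > e^{-na}`. For a component `k ≤ i` we
have `H(X_k) ≥ H(X_i) > a`; differentiating `s ↦ ∑ p^{1+s}` at `s = 0` gives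
`∑ p^{1+s} < e^{-sb}` for some `s > 0` and `a < b < H(X_k)`, and a Chernoff bound then shows that
`P_kⁿ` gives the heavy set a mass that tends to `0`. The components `k > i` contribute at most
their total weight `1 - A_{i+1}`, so, as `ε < A_{i+1}`, the heavy set eventually has mass at most
`1 - ε - δ` for some `δ > 0`. Every `Q ≤ P_{Xⁿ}` of mass at least `1 - ε` then puts mass at least
`δ` on light points, where `Q^α ≥ Q e^{na(1-α)}`; hence `H_α^ε(P_{Xⁿ}) ≥ na + log δ / (1 - α)`.
Divide by `n` and let `a ↑ H(X_i)`.
-/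

open Filter Topology Set Real

theorem ENNReal.tsum_fin_pi_prod {X : Type*} :
    ∀ {n : ℕ} (g : Fin n → X → ℝ≥0∞), ∑' x : Fin n → X, ∏ t, g t (x t) = ∏ t, ∑' y, g t y
  | 0, g => by simp
  | n + 1, g => by
    rw [← (Fin.consEquiv fun _ => X).tsum_eq, Fin.prod_univ_succ]
    simp only [Fin.consEquiv_apply, Fin.prod_univ_succ, Fin.cons_zero, Fin.cons_succ]
    rw [ENNReal.tsum_prod']
    simp_rw [ENNReal.tsum_mul_left, ENNReal.tsum_fin_pi_prod, ENNReal.tsum_mul_right]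

theorem exists_pos_mul_lt_sum_sub_rpow_one_add {ι : Type*} (F : Finset ι) {f : ι → ℝ}
    (hf : ∀ x ∈ F, 0 ≤ f x) {c : ℝ} (hc : c < ∑ x ∈ F, f x * log (1 / f x)) :
    ∃ s > 0, s * c < ∑ x ∈ F, (f x - f x ^ (1 + s)) := by
  -- For `s > 0` this is `∑ f x ^ (1 + s)`, written so as to be smooth in `s` even if `f x = 0`.
  set φ : ℝ → ℝ := fun s => ∑ x ∈ F, f x * exp (s * log (f x))
  have hφ : HasDerivAt φ (∑ x ∈ F, f x * log (f x)) 0 := by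
    refine HasDerivAt.fun_sum fun x _ => ?_
    simpa using (((hasDerivAt_id (0 : ℝ)).mul_const (log (f x))).exp).const_mul (f x)
  have hφ' : ∑ x ∈ F, f x * log (f x) < -c := by
    simp only [one_div, log_inv, mul_neg, Finset.sum_neg_distrib] at hc
    linarith
  obtain ⟨s, hslope, hs : 0 < s⟩ := ((hφ.hasDerivWithinAt.limsup_slope_le' self_notMem_Ioi hφ').and
    self_mem_nhdsWithin).exists
  have hφs : φ s = ∑ x ∈ F, f x ^ (1 + s) := Finset.sum_congr rfl fun x hx => by
    rcases (hf x hx).eq_or_lt with h0 | hpos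
    · rw [← h0, zero_rpow (by linarith), zero_mul]
    · rw [rpow_add hpos, rpow_one, rpow_def_of_pos hpos, mul_comm (log _)]
  refine ⟨s, hs, ?_⟩
  rw [slope_def_field, sub_zero, div_lt_iff₀ hs, hφs] at hslope
  simp only [φ, zero_mul, exp_zero, mul_one] at hslope
  rw [Finset.sum_sub_distrib]
  linarith

theorem exists_pos_tsum_rpow_one_add_lt_exp {X : Type*} {f : X → ℝ} (hf0 : ∀ x, 0 ≤ f x)
    (hf1 : HasSum f 1) {h c : ℝ} (hH : HasSum (fun x => f x * log (1 / f x)) h) (hc : c < h) :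
    ∃ s > 0, ∑' x, f x ^ (1 + s) < exp (-(s * c)) := by
  obtain ⟨F, hF⟩ := (hH.eventually (eventually_gt_nhds hc)).exists
  obtain ⟨s, hs, hsF⟩ := exists_pos_mul_lt_sum_sub_rpow_one_add F (fun x _ => hf0 x) hF
  have hle : ∀ x, f x ^ (1 + s) ≤ f x := fun x =>
    rpow_le_self_of_le_one (hf0 x) (le_hasSum hf1 x fun y _ => hf0 y) (by linarith)
  have hsum : Summable fun x => f x ^ (1 + s) :=
    hf1.summable.of_nonneg_of_le (fun x => rpow_nonneg (hf0 x) _) hle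
  have hgap : ∑ x ∈ F, (f x - f x ^ (1 + s)) ≤ ∑' x, f x - ∑' x, f x ^ (1 + s) := by
    rw [← hf1.summable.tsum_sub hsum]
    exact (hf1.summable.sub hsum).sum_le_tsum F fun x _ => sub_nonneg.2 (hle x)
  rw [hf1.tsum_eq] at hgap
  exact ⟨s, hs, by linarith [add_one_le_exp (-(s * c))]⟩

theorem ENNReal.exists_pos_tsum_rpow_one_add_lt {X : Type*} {p : X → ℝ≥0∞}
    (hp : ∑' x, p x = 1) {h c : ℝ}
    (hH : HasSum (fun x => (p x).toReal * Real.log (1 / (p x).toReal)) h) (hc : c < h) :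
    ∃ s : ℝ, 0 < s ∧ ∑' x, p x ^ (1 + s) < ENNReal.ofReal (exp (-c)) ^ s := by
  have hp_top : ∀ x, p x ≠ ⊤ := fun x => ne_top_of_le_ne_top one_ne_top (hp ▸ ENNReal.le_tsum x)
  have hf1 : HasSum (fun x => (p x).toReal) 1 := by
    have := ENNReal.hasSum_toReal (hp ▸ one_ne_top)
    rwa [← ENNReal.tsum_toReal_eq hp_top, hp, toReal_one] at this
  obtain ⟨s, hs, hlt⟩ := exists_pos_tsum_rpow_one_add_lt_exp (fun x => toReal_nonneg) hf1 hH hc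
  have hle : ∀ x, p x ^ (1 + s) ≤ p x := fun x =>
    ENNReal.rpow_le_self_of_le_one (hp ▸ ENNReal.le_tsum x) (by linarith)
  have hfin : ∑' x, p x ^ (1 + s) ≠ ⊤ :=
    ne_top_of_le_ne_top (hp ▸ one_ne_top) (ENNReal.tsum_le_tsum hle)
  refine ⟨s, hs, ?_⟩
  calc ∑' x, p x ^ (1 + s) = ENNReal.ofReal (∑' x, (p x).toReal ^ (1 + s)) := by
        simp_rw [ENNReal.toReal_rpow]
        rw [← ENNReal.tsum_toReal_eq (fun x => ne_top_of_le_ne_top (hp_top x) (hle x)),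
          ofReal_toReal hfin]
    _ < ENNReal.ofReal (exp (-c)) ^ s := by
        rw [ENNReal.ofReal_rpow_of_pos (exp_pos _), ← exp_mul, neg_mul, mul_comm]
        exact (ENNReal.ofReal_lt_ofReal_iff (exp_pos _)).2 hlt

theorem ENNReal.le_mul_add_rpow_of_lt {q μ t u : ℝ≥0∞} {s : ℝ} (hs : 0 < s) (hu : u ≠ 0)
    (htμ : t < μ) : q ≤ u * t⁻¹ * μ + u ^ (-s) * q ^ (1 + s) := by
  rcases le_or_gt q u with hqu | huq
  · refine le_add_right (hqu.trans ?_)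
    have : 1 ≤ μ / t := (ENNReal.le_div_iff_mul_le (.inr htμ.ne_bot) (.inl htμ.ne_top)).2
      (by rw [one_mul]; exact htμ.le)
    calc u = u * 1 := (mul_one u).symm
      _ ≤ u * (μ / t) := by gcongr
      _ = u * t⁻¹ * μ := by rw [div_eq_mul_inv, mul_comm μ, mul_assoc]
  · refine le_add_left ?_
    calc q = u ^ (-s) * u ^ s * q := by
          rw [← ENNReal.rpow_add _ _ hu huq.ne_top, neg_add_cancel, ENNReal.rpow_zero, one_mul]
      _ ≤ u ^ (-s) * q ^ s * q := by gcongr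
      _ = u ^ (-s) * q ^ (1 + s) := by
          rw [ENNReal.rpow_add_of_nonneg _ _ zero_le_one hs.le, ENNReal.rpow_one, mul_assoc,
            mul_comm (q ^ s)]

theorem ENNReal.tsum_indicator_lt_le {Y : Type*} (μ q : Y → ℝ≥0∞) {t u : ℝ≥0∞} {s : ℝ}
    (hs : 0 < s) (hu : u ≠ 0) :
    ∑' y, {y | t < μ y}.indicator q y ≤
      u * t⁻¹ * ∑' y, μ y + u ^ (-s) * ∑' y, q y ^ (1 + s) := by
  rw [← ENNReal.tsum_mul_left, ← ENNReal.tsum_mul_left, ← ENNReal.tsum_add]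
  refine ENNReal.tsum_le_tsum fun y => ?_
  by_cases hy : t < μ y
  · rw [indicator_of_mem (show y ∈ {y | t < μ y} from hy)]
    exact ENNReal.le_mul_add_rpow_of_lt hs hu hy
  · rw [indicator_of_notMem (show y ∉ {y | t < μ y} from hy)]
    exact zero_le

theorem tendsto_tsum_indicator_lt_pi_prod {X : Type*} {p : X → ℝ≥0∞} (hp : ∑' x, p x = 1)
    {h a : ℝ} (hH : HasSum (fun x => (p x).toReal * Real.log (1 / (p x).toReal)) h)
    (ha : a < h) (μ : ∀ n, (Fin n → X) → ℝ≥0∞) (hμ : ∀ n, ∑' x, μ n x ≤ 1) :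
    Tendsto (fun n => ∑' x : Fin n → X,
      {x | ENNReal.ofReal (exp (-(n * a))) < μ n x}.indicator (fun x => ∏ t, p (x t)) x)
      atTop (𝓝 0) := by
  obtain ⟨b, hab, hbh⟩ := exists_between ha
  obtain ⟨s, hs, hps⟩ := ENNReal.exists_pos_tsum_rpow_one_add_lt hp hH hbh
  set r := ENNReal.ofReal (exp (-a))
  set v := ENNReal.ofReal (exp (-b))
  have hv0 : v ≠ 0 := by simp [v, exp_pos]
  have hvr : v * r⁻¹ < 1 := by
    rw [← div_eq_mul_inv, ENNReal.div_lt_iff (.inl (by simp [r, exp_pos])) (.inl (by simp [r])),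
      one_mul]
    exact (ENNReal.ofReal_lt_ofReal_iff (exp_pos _)).2 (exp_lt_exp.2 (neg_lt_neg hab))
  have hvs : v ^ (-s) * ∑' x, p x ^ (1 + s) < 1 := by
    rw [ENNReal.rpow_neg, mul_comm, ← div_eq_mul_inv,
      ENNReal.div_lt_iff (.inl (ENNReal.rpow_pos (pos_iff_ne_zero.2 hv0) (by simp [v])).ne')
        (.inl (ENNReal.rpow_ne_top_of_nonneg hs.le ENNReal.ofReal_ne_top)), one_mul]
    exact hps
  have hlim := (ENNReal.tendsto_pow_atTop_nhds_zero_of_lt_one hvr).add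
    (ENNReal.tendsto_pow_atTop_nhds_zero_of_lt_one hvs)
  rw [add_zero] at hlim
  refine tendsto_of_tendsto_of_tendsto_of_le_of_le tendsto_const_nhds hlim (fun n => zero_le)
    fun n => ?_
  have hr : ENNReal.ofReal (exp (-(n * a))) = r ^ n := by
    rw [← ENNReal.ofReal_pow (exp_nonneg _), ← exp_nat_mul, mul_neg]
  rw [hr]
  have hpow : (v ^ n) ^ (-s) = (v ^ (-s)) ^ n := by
    rw [← ENNReal.rpow_natCast, ← ENNReal.rpow_mul, mul_comm, ENNReal.rpow_mul,
      ENNReal.rpow_natCast]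
  have hprod : ∑' x : Fin n → X, (∏ t, p (x t)) ^ (1 + s) = (∑' x, p x ^ (1 + s)) ^ n := by
    simp_rw [← ENNReal.prod_rpow_of_nonneg (by linarith : (0 : ℝ) ≤ 1 + s)]
    simp [ENNReal.tsum_fin_pi_prod fun _ y => p y ^ (1 + s)]
  calc _ ≤ v ^ n * (r ^ n)⁻¹ * ∑' x, μ n x +
        (v ^ n) ^ (-s) * ∑' x : Fin n → X, (∏ t, p (x t)) ^ (1 + s) :=
        ENNReal.tsum_indicator_lt_le _ _ hs (pow_ne_zero n hv0)
    _ = (v * r⁻¹) ^ n * ∑' x, μ n x + (v ^ (-s) * ∑' x, p x ^ (1 + s)) ^ n := by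
        rw [hpow, hprod, mul_pow, mul_pow, ENNReal.inv_pow]
    _ ≤ (v * r⁻¹) ^ n + (v ^ (-s) * ∑' x, p x ^ (1 + s)) ^ n := by
        gcongr
        exact mul_le_of_le_one_right' (hμ n)

theorem tsum_indicator_mixProd {X : Type*} {m : ℕ} (w : Fin m → ℝ) (P : Fin m → X → ℝ≥0∞)
    (n : ℕ) (S : Set (Fin n → X)) :
    ∑' x, S.indicator (mixProd w P n) x =
      ∑ k, ENNReal.ofReal (w k) * ∑' x, S.indicator (fun x => ∏ t, P k (x t)) x := by
  simp_rw [← ENNReal.tsum_mul_left]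
  rw [← Summable.tsum_finsetSum fun _ _ => ENNReal.summable]
  refine tsum_congr fun x => ?_
  by_cases hx : x ∈ S <;> simp [hx, mixProd]

theorem tsum_mixProd {X : Type*} {m : ℕ} {w : Fin m → ℝ} (hw : ∀ k, 0 ≤ w k)
    (hw1 : ∑ k, w k = 1) {P : Fin m → X → ℝ≥0∞} (hP : ∀ k, ∑' x, P k x = 1) (n : ℕ) :
    ∑' x, mixProd w P n x = 1 := by
  have := tsum_indicator_mixProd w P n univ
  simp only [indicator_univ] at this
  simp [this, ENNReal.tsum_fin_pi_prod, hP, ← ENNReal.ofReal_sum_of_nonneg fun k _ => hw k, hw1]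

theorem exists_pos_eventually_tsum_indicator_mixProd_add_le {X : Type*} {m : ℕ}
    {w : Fin m → ℝ} (hw : ∀ k, 0 ≤ w k) (hw1 : ∑ k, w k = 1) {P : Fin m → X → ℝ≥0∞}
    (hP : ∀ k, ∑' x, P k x = 1) {H : Fin m → ℝ}
    (hH : ∀ k, HasSum (fun x => (P k x).toReal * Real.log (1 / (P k x).toReal)) (H k))
    (hanti : Antitone H) {i : Fin m} {a ε : ℝ} (ha : a < H i) (hε : ε < Aweight w (i + 1)) :
    ∃ δ > 0, ∀ᶠ n : ℕ in atTop,
      ∑' x, {x | ENNReal.ofReal (exp (-(n * a))) < mixProd w P n x}.indicator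
        (mixProd w P n) x + ENNReal.ofReal δ ≤ ENNReal.ofReal (1 - ε) := by
  set K := Finset.univ.filter fun k : Fin m => (k : ℕ) < i + 1
  set b : Fin m → ℕ → ℝ≥0∞ := fun k n => ∑' x : Fin n → X,
    {x | ENNReal.ofReal (exp (-(n * a))) < mixProd w P n x}.indicator (fun x => ∏ t, P k (x t)) x
  have hb : ∀ k ∈ K, Tendsto (b k) atTop (𝓝 0) := fun k hk => by
    have hki : k ≤ i := Fin.le_iff_val_le_val.2 (by simpa [K, Nat.lt_succ_iff] using hk)
    exact tendsto_tsum_indicator_lt_pi_prod (hP k) (hH k) (ha.trans_le (hanti hki))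
      (mixProd w P) fun n => (tsum_mixProd hw hw1 hP n).le
  have hb1 : ∀ k n, b k n ≤ 1 := fun k n =>
    (ENNReal.tsum_le_tsum fun x => indicator_le_self _ _ x).trans
      (by simp [ENNReal.tsum_fin_pi_prod, hP])
  have hKc : ∑ k ∈ Kᶜ, w k = 1 - Aweight w (i + 1) := by
    rw [← hw1, ← Finset.sum_add_sum_compl K w]
    exact (add_sub_cancel_left _ _).symm
  have hKc0 : 0 ≤ 1 - Aweight w (i + 1) := hKc ▸ Finset.sum_nonneg fun k _ => hw k
  have hlim : Tendsto (fun n => ∑ k ∈ K, ENNReal.ofReal (w k) * b k n +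
      ∑ k ∈ Kᶜ, ENNReal.ofReal (w k)) atTop (𝓝 (ENNReal.ofReal (1 - Aweight w (i + 1)))) := by
    have := (tendsto_finsetSum K fun k hk =>
      ENNReal.Tendsto.const_mul (hb k hk) (.inr (ENNReal.ofReal_ne_top (r := w k)))).add
      (tendsto_const_nhds (x := ∑ k ∈ Kᶜ, ENNReal.ofReal (w k)))
    simpa [← hKc, ENNReal.ofReal_sum_of_nonneg fun k _ => hw k] using this
  set δ := (Aweight w (i + 1) - ε) / 2 with hδ
  have hgap : ENNReal.ofReal (1 - Aweight w (i + 1)) < ENNReal.ofReal (1 - ε - δ) :=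
    (ENNReal.ofReal_lt_ofReal_iff_of_nonneg hKc0).2 (by linarith [hδ])
  refine ⟨δ, by linarith [hδ], ?_⟩
  filter_upwards [hlim.eventually (gt_mem_nhds hgap)] with n hn
  calc _ ≤ ENNReal.ofReal (1 - ε - δ) + ENNReal.ofReal δ := by
        gcongr
        refine le_trans ?_ hn.le
        rw [tsum_indicator_mixProd, ← Finset.sum_add_sum_compl K]
        gcongr with k hk
        exact mul_le_of_le_one_right' (hb1 k n)
    _ = ENNReal.ofReal (1 - ε) := by
        rw [← ENNReal.ofReal_add (by linarith [hδ]) (by linarith [hδ]), sub_add_cancel]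

theorem ENNReal.mul_rpow_sub_one_le_rpow {x t : ℝ≥0∞} {α : ℝ} (hα : α ≤ 1) (hxt : x ≤ t) :
    x * t ^ (α - 1) ≤ x ^ α := by
  rcases eq_or_ne x 0 with rfl | hx0
  · simp
  rcases eq_or_ne x ⊤ with rfl | hxtop
  · rcases hα.eq_or_lt with rfl | hlt
    · simp
    · simp [top_le_iff.1 hxt, ENNReal.top_rpow_of_neg (by linarith : α - 1 < 0)]
  calc x * t ^ (α - 1) ≤ x * x ^ (α - 1) := by
        refine mul_le_mul_right ?_ x
        rw [← neg_sub, ENNReal.rpow_neg, ENNReal.rpow_neg]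
        exact ENNReal.inv_le_inv.2 (ENNReal.rpow_le_rpow hxt (by linarith))
    _ = x ^ α := by
        conv_rhs => rw [← add_sub_cancel 1 α, ENNReal.rpow_add _ _ hx0 hxtop, ENNReal.rpow_one]

theorem le_rSmooth_of_tsum_indicator_add_le {Y : Type*} {P : Y → ℝ≥0∞} {ε α : ℝ}
    (hα : α ≤ 1) {t δ : ℝ≥0∞}
    (h : ∑' y, {y | t < P y}.indicator P y + δ ≤ ENNReal.ofReal (1 - ε)) :
    δ * t ^ (α - 1) ≤ rSmooth P ε α := by
  refine le_iInf₂ fun Q ⟨hQP, hQ⟩ => ?_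
  set S := {y | t < P y}
  have hδ : δ ≤ ∑' y, Sᶜ.indicator Q y := by
    have hbad : ∑' y, S.indicator P y ≠ ⊤ :=
      ne_top_of_le_ne_top ENNReal.ofReal_ne_top (le_self_add.trans h)
    refine (ENNReal.add_le_add_iff_left hbad).1 (h.trans (hQ.trans ?_))
    rw [← ENNReal.tsum_add]
    refine ENNReal.tsum_le_tsum fun y => ?_
    by_cases hy : y ∈ S <;> simp [hy, hQP y]
  calc δ * t ^ (α - 1) ≤ (∑' y, Sᶜ.indicator Q y) * t ^ (α - 1) := mul_le_mul_left hδ _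
    _ = ∑' y, Sᶜ.indicator Q y * t ^ (α - 1) := ENNReal.tsum_mul_right.symm
    _ ≤ ∑' y, Q y ^ α := ENNReal.tsum_le_tsum fun y => by
        by_cases hy : y ∈ S
        · simp [hy]
        · simpa [hy] using ENNReal.mul_rpow_sub_one_le_rpow hα ((hQP y).trans (not_lt.1 hy))

theorem coe_add_le_smoothRenyi_of_tsum_indicator_add_le {Y : Type*} {P : Y → ℝ≥0∞}
    {ε α b δ : ℝ} (hα : α < 1) (hδ : 0 < δ)
    (h : ∑' y, {y | ENNReal.ofReal (exp (-b)) < P y}.indicator P y + ENNReal.ofReal δ ≤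
      ENNReal.ofReal (1 - ε)) :
    ((b + (1 - α)⁻¹ * Real.log δ : ℝ) : EReal) ≤ smoothRenyi P ε α := by
  have hr := le_rSmooth_of_tsum_indicator_add_le hα.le h
  rw [ENNReal.ofReal_rpow_of_pos (exp_pos _), ← exp_mul, ← ENNReal.ofReal_mul hδ.le] at hr
  have hlog := ENNReal.log_monotone hr
  rw [ENNReal.log_ofReal_of_pos (by positivity)] at hlog
  calc ((b + (1 - α)⁻¹ * Real.log δ : ℝ) : EReal)
      = (((1 - α)⁻¹ : ℝ) : EReal) * (Real.log (δ * exp (-b * (α - 1))) : EReal) := by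
        rw [← EReal.coe_mul, Real.log_mul hδ.ne' (exp_pos _).ne', Real.log_exp]
        congr 1
        field_simp [(sub_pos.2 hα).ne']
        ring
    _ ≤ smoothRenyi P ε α :=
        mul_le_mul_of_nonneg_left hlog (by exact_mod_cast (inv_pos.2 (sub_pos.2 hα)).le)

theorem EReal.le_liminf_inv_mul_of_eventually_le {f : ℕ → EReal} {a C : ℝ}
    (h : ∀ᶠ n : ℕ in atTop, ((n * a + C : ℝ) : EReal) ≤ f n) :
    (a : EReal) ≤ liminf (fun n : ℕ => (((n : ℝ)⁻¹ : ℝ) : EReal) * f n) atTop := by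
  have hlim : Tendsto (fun n : ℕ => ((a + (n : ℝ)⁻¹ * C : ℝ) : EReal)) atTop (𝓝 a) := by
    refine (continuous_coe_real_ereal.tendsto a).comp ?_
    simpa using (tendsto_inv_atTop_nhds_zero_nat.mul_const C).const_add a
  rw [← hlim.liminf_eq]
  refine liminf_le_liminf ?_
  filter_upwards [h, eventually_ne_atTop 0] with n hn hn0
  calc ((a + (n : ℝ)⁻¹ * C : ℝ) : EReal)
      = (((n : ℝ)⁻¹ : ℝ) : EReal) * ((n * a + C : ℝ) : EReal) := by
        rw [← EReal.coe_mul]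
        congr 1
        field_simp
    _ ≤ _ := mul_le_mul_of_nonneg_left hn (by exact_mod_cast inv_nonneg.2 (Nat.cast_nonneg n))

theorem mixture_smoothRenyi_liminf_ge_general {X : Type*} {m : ℕ}
    (w : Fin m → ℝ) (P : Fin m → X → ℝ≥0∞) (H : Fin m → ℝ)
    (hw : ∀ k, 0 < w k) (hw1 : ∑ k, w k = 1)
    (hP : ∀ k, ∑' x, P k x = 1)
    (hH : ∀ k, HasSum (fun x => (P k x).toReal * Real.log (1 / (P k x).toReal)) (H k))
    (hanti : StrictAnti H) (α ε : ℝ) (hα : α ∈ Set.Ioo (0 : ℝ) 1)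
    (i : Fin m) (hεu : ε < Aweight w ((i : ℕ) + 1)) :
    ((H i : ℝ) : EReal) ≤
      Filter.liminf
        (fun n : ℕ => (((n : ℝ)⁻¹ : ℝ) : EReal) * smoothRenyi (mixProd w P n) ε α)
        Filter.atTop := by
  refine EReal.ge_of_forall_gt_iff_ge.1 fun a ha => ?_
  obtain ⟨δ, hδ, hbad⟩ := exists_pos_eventually_tsum_indicator_mixProd_add_le
    (fun k => (hw k).le) hw1 hP hH hanti.antitone (EReal.coe_lt_coe_iff.1 ha) hεu
  exact EReal.le_liminf_inv_mul_of_eventually_le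
    (hbad.mono fun n hn => coe_add_le_smoothRenyi_of_tsum_indicator_add_le hα.2 hδ hn)

/-- Asymptotic smooth Rényi entropy of a mixture, lower bound: for a mixture of
`m` i.i.d. sources with strictly decreasing entropies, `α ∈ (0,1)` and
`A_i < ε < A_{i+1}`, `liminf_{n→∞} (1/n) H_α^ε(P_{X^n}) ≥ H(X_i)`. -/
theorem mixture_smoothRenyi_liminf_ge {X : Type*} [Countable X] {m : ℕ}
    (w : Fin m → ℝ) (P : Fin m → X → ℝ≥0∞) (H : Fin m → ℝ)
    (hw : ∀ k, 0 < w k) (hw1 : ∑ k, w k = 1)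
    (hP : ∀ k, ∑' x, P k x = 1)
    (hH : ∀ k, HasSum (fun x => (P k x).toReal * Real.log (1 / (P k x).toReal)) (H k))
    (hanti : StrictAnti H) (α ε : ℝ) (hα : α ∈ Set.Ioo (0 : ℝ) 1)
    (i : Fin m) (hεl : Aweight w (i : ℕ) < ε) (hεu : ε < Aweight w ((i : ℕ) + 1)) :
    ((H i : ℝ) : EReal) ≤
      Filter.liminf
        (fun n : ℕ => (((n : ℝ)⁻¹ : ℝ) : EReal) * smoothRenyi (mixProd w P n) ε α)
        Filter.atTop :=
  mixture_smoothRenyi_liminf_ge_general w P H hw hw1 hP hH hanti α ε hα i hεu
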